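/- arXiv:2004.03417 — 5 statements merged into one kernel-verified Lean document; each statement's English description precedes it below -/
import Mathlib

section
/- Let T > 0 and let x : [0,T] → ℝ be α-Hölder continuous and w : [0,T] → ℝ be β-Hölder continuous with α, β ∈ (0,1] and α + β > 1. Then there exists a unique continuous map J : [0,T] → ℝ with J(0) = 0 such that for every s, t ∈ [0,T] with s < t and every sequence (D_n) of dissections of [s,t] whose meshes tend to 0, the Riemann sums J_{x,w,D_n}(s,t) converge to J(t) − J(s). -/
/-!
Young's maximal inequality: a dissection of `[s, t]` into `n + 1 ≥ 2` intervals has a point whose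
two neighbouring intervals have total length at most `2 (t - s) / n`, and deleting that point
changes the Riemann sum by at most `Cx Cw (2 (t - s) / n) ^ (α + β)`. Deleting points one at a
time down to `{s, t}` gives `|J_D(s, t) - x(s) (w(t) - w(s))| ≤ K (t - s) ^ (α + β)` with
`K = Cx Cw 2 ^ (α + β) ζ(α + β)`. Applied on each interval of a dissection `D` of mesh `δ`, this
bounds the change of the Riemann sum under refinement by `K δ ^ (α + β - 1) (t - s)`; comparing
two dissections through their common refinement shows that the Riemann sums converge as the mesh
tends to `0`, because `α + β > 1`. The limit `I(s, t)` is additive in the interval, so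
`J(t) = I(0, t)` is a primitive, and it is `β`-Hölder, hence continuous. Uniqueness holds since
`J(t) - J(0)` must be the limit of the Riemann sums along uniform dissections of `[0, t]`.
-/

open Filter

/-- The Riemann sum of `x` with respect to `w` for the dissection `D 0 < D 1 < … < D m`. -/
def RiemannSum (x w : ℝ → ℝ) (m : ℕ) (D : ℕ → ℝ) : ℝ :=
  ∑ k ∈ Finset.range m, x (D k) * (w (D (k + 1)) - w (D k))

/-- `D 0 = s < D 1 < … < D m = t` is a dissection of `[s, t]`. -/
def IsDissection (s t : ℝ) (m : ℕ) (D : ℕ → ℝ) : Prop :=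
  0 < m ∧ D 0 = s ∧ D m = t ∧ ∀ k < m, D k < D (k + 1)

/-- `J` is a primitive of the Young integral of `x` with respect to `w` on `[0, T]`:
it is continuous, vanishes at `0`, and for all `0 ≤ s < t ≤ T` the Riemann sums along any
sequence of dissections of `[s, t]` with mesh tending to `0` converge to `J t - J s`. -/
def IsYoungPrimitive (T : ℝ) (x w J : ℝ → ℝ) : Prop :=
  ContinuousOn J (Set.Icc 0 T) ∧ J 0 = 0 ∧
    ∀ s t : ℝ, 0 ≤ s → s < t → t ≤ T →
      ∀ (m : ℕ → ℕ) (D : ℕ → ℕ → ℝ),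
        (∀ n, IsDissection s t (m n) (D n)) →
        (∀ ε > 0, ∃ N : ℕ, ∀ n ≥ N, ∀ k < m n, D n (k + 1) - D n k < ε) →
        Tendsto (fun n => RiemannSum x w (m n) (D n)) atTop (nhds (J t - J s))

open Topology Finset

/-- Unlike Mathlib's `HolderOnWith`, the constant and the exponent are real numbers. -/
def IsHolderOn (C γ : ℝ) (f : ℝ → ℝ) (S : Set ℝ) : Prop :=
  ∀ s ∈ S, ∀ t ∈ S, |f t - f s| ≤ C * |t - s| ^ γ

namespace IsHolderOn

variable {C γ : ℝ} {f : ℝ → ℝ} {S : Set ℝ}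

lemma mono (hf : IsHolderOn C γ f S) {S' : Set ℝ} (h : S' ⊆ S) : IsHolderOn C γ f S' :=
  fun s hs t ht => hf s (h hs) t (h ht)

lemma abs_sub_le_of_le (hf : IsHolderOn C γ f S) (hC : 0 ≤ C) (hγ : 0 ≤ γ) {a b c : ℝ}
    (ha : a ∈ S) (hb : b ∈ S) (hab : a ≤ b) (hc : b - a ≤ c) : |f b - f a| ≤ C * c ^ γ := by
  refine (hf a ha b hb).trans (mul_le_mul_of_nonneg_left ?_ hC)
  rw [abs_of_nonneg (sub_nonneg.2 hab)]
  exact Real.rpow_le_rpow (sub_nonneg.2 hab) hc hγ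

lemma of_le (hγ : 0 < γ) (h : ∀ s ∈ S, ∀ t ∈ S, s < t → |f t - f s| ≤ C * (t - s) ^ γ) :
    IsHolderOn C γ f S := by
  intro s hs t ht
  rcases lt_trichotomy s t with hst | rfl | hts
  · simpa [abs_of_pos (sub_pos.2 hst)] using h s hs t ht hst
  · simp [Real.zero_rpow hγ.ne']
  · rw [abs_sub_comm, abs_sub_comm t]
    simpa [abs_of_pos (sub_pos.2 hts)] using h t ht s hs hts

lemma abs_le_of_mem_Icc {a b : ℝ} (hf : IsHolderOn C γ f (Set.Icc a b)) (hC : 0 ≤ C) (hγ : 0 ≤ γ)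
    {u : ℝ} (hu : u ∈ Set.Icc a b) : |f u| ≤ |f a| + C * (b - a) ^ γ := by
  have hau : |f u - f a| ≤ C * (b - a) ^ γ :=
    hf.abs_sub_le_of_le hC hγ (Set.left_mem_Icc.2 (hu.1.trans hu.2)) hu hu.1 (by linarith [hu.2])
  calc |f u| = |f a + (f u - f a)| := by rw [add_sub_cancel]
    _ ≤ |f a| + |f u - f a| := abs_add_le _ _
    _ ≤ |f a| + C * (b - a) ^ γ := by gcongr

lemma continuousOn (hf : IsHolderOn C γ f S) (hγ : 0 < γ) : ContinuousOn f S := by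
  intro a ha
  have hbound : Tendsto (fun u => C * |u - a| ^ γ) (𝓝[S] a) (𝓝 0) := by
    have : Continuous fun u => C * |u - a| ^ γ :=
      continuous_const.mul ((continuous_abs.comp (continuous_sub_right a)).rpow_const
        fun _ => Or.inr hγ.le)
    simpa [Real.zero_rpow hγ.ne'] using (this.tendsto a).mono_left nhdsWithin_le_nhds
  refine tendsto_iff_norm_sub_tendsto_zero.2 (squeeze_zero' ?_ ?_ hbound)
  · exact Eventually.of_forall fun _ => norm_nonneg _
  · filter_upwards [self_mem_nhdsWithin] with u hu using hf a ha u hu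

end IsHolderOn

structure IsYoungPair (Cx Cw α β : ℝ) (x w : ℝ → ℝ) (S : Set ℝ) : Prop where
  holder_left : IsHolderOn Cx α x S
  holder_right : IsHolderOn Cw β w S
  const_nonneg_left : 0 ≤ Cx
  const_nonneg_right : 0 ≤ Cw
  exp_nonneg_left : 0 ≤ α
  exp_nonneg_right : 0 ≤ β
  one_lt_exp_add : 1 < α + β

namespace IsYoungPair

variable {Cx Cw α β : ℝ} {x w : ℝ → ℝ} {S : Set ℝ}

lemma mono (h : IsYoungPair Cx Cw α β x w S) {S' : Set ℝ} (hS : S' ⊆ S) :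
    IsYoungPair Cx Cw α β x w S' :=
  { h with holder_left := h.holder_left.mono hS, holder_right := h.holder_right.mono hS }

lemma abs_mul_sub_le {a b c : ℝ} (h : IsYoungPair Cx Cw α β x w S) (ha : a ∈ S) (hb : b ∈ S)
    (hc : c ∈ S) (hab : a ≤ b) (hbc : b ≤ c) :
    |(x b - x a) * (w c - w b)| ≤ Cx * Cw * (c - a) ^ (α + β) := by
  have hx := h.holder_left.abs_sub_le_of_le h.const_nonneg_left h.exp_nonneg_left ha hb hab
    (c := c - a) (by linarith)
  have hw := h.holder_right.abs_sub_le_of_le h.const_nonneg_right h.exp_nonneg_right hb hc hbc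
    (c := c - a) (by linarith)
  rw [abs_mul, Real.rpow_add_of_nonneg (by linarith) h.exp_nonneg_left h.exp_nonneg_right]
  calc |x b - x a| * |w c - w b| ≤ (Cx * (c - a) ^ α) * (Cw * (c - a) ^ β) :=
        mul_le_mul hx hw (abs_nonneg _) ((abs_nonneg _).trans hx)
    _ = Cx * Cw * ((c - a) ^ α * (c - a) ^ β) := by ring

end IsYoungPair

namespace IsDissection

variable {s t : ℝ} {m : ℕ} {D : ℕ → ℝ}

lemma strictMonoOn (hD : IsDissection s t m D) : StrictMonoOn D (Set.Iic m) :=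
  strictMonoOn_Iic_of_lt_succ hD.2.2.2

lemma lt (hD : IsDissection s t m D) : s < t := by
  rw [← hD.2.1, ← hD.2.2.1]
  exact hD.strictMonoOn (Set.mem_Iic.2 (Nat.zero_le m)) (Set.mem_Iic.2 le_rfl) hD.1

lemma mem_Icc (hD : IsDissection s t m D) {k : ℕ} (hk : k ≤ m) : D k ∈ Set.Icc s t := by
  rw [← hD.2.1, ← hD.2.2.1]
  exact ⟨hD.strictMonoOn.monotoneOn (Set.mem_Iic.2 (Nat.zero_le m)) hk (Nat.zero_le k),
    hD.strictMonoOn.monotoneOn hk (Set.mem_Iic.2 le_rfl) hk⟩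

end IsDissection

def dropPoint (D : ℕ → ℝ) (j k : ℕ) : ℝ := if k < j then D k else D (k + 1)

lemma IsDissection.dropPoint {s t : ℝ} {m i : ℕ} {D : ℕ → ℝ} (hD : IsDissection s t (m + 1) D)
    (hi : i < m) : IsDissection s t m (_root_.dropPoint D (i + 1)) := by
  refine ⟨by omega, by simp [_root_.dropPoint, hD.2.1], ?_, fun k hk => ?_⟩
  · simp [_root_.dropPoint, show ¬ m < i + 1 by omega, hD.2.2.1]
  simp only [_root_.dropPoint]
  split_ifs
  · exact hD.2.2.2 k (by omega)
  · exact hD.strictMonoOn (Set.mem_Iic.2 (by omega)) (Set.mem_Iic.2 (by omega))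
      (by omega : k < k + 1 + 1)
  · omega
  · exact hD.2.2.2 (k + 1) (by omega)

lemma riemannSum_dropPoint (x w : ℝ → ℝ) {m i : ℕ} (hi : i < m) (D : ℕ → ℝ) :
    RiemannSum x w (m + 1) D = RiemannSum x w m (dropPoint D (i + 1)) +
      (x (D (i + 1)) - x (D i)) * (w (D (i + 2)) - w (D (i + 1))) := by
  obtain ⟨r, rfl⟩ := Nat.exists_eq_add_of_lt hi
  set f : ℕ → ℝ := fun k => x (D k) * (w (D (k + 1)) - w (D k))
  set g : ℕ → ℝ := fun k =>
    x (dropPoint D (i + 1) k) * (w (dropPoint D (i + 1) (k + 1)) - w (dropPoint D (i + 1) k))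
  have hlow : ∀ k ∈ range i, g k = f k := fun k hk => by
    have := mem_range.1 hk
    simp [g, f, dropPoint, this, this.le]
  have hmid : g i = x (D i) * (w (D (i + 2)) - w (D i)) := by simp [g, dropPoint]
  have hhigh : ∀ k ∈ range r, g (i + 1 + k) = f (i + 2 + k) := fun k _ => by
    simp only [g, f, dropPoint, show ¬ i + 1 + k < i + 1 by omega,
      show ¬ i + 1 + k + 1 < i + 1 by omega, if_false]
    ring_nf
  change ∑ k ∈ range (i + r + 1 + 1), f k = ∑ k ∈ range (i + r + 1), g k + _
  rw [show i + r + 1 + 1 = i + 2 + r by ring, show i + r + 1 = i + 1 + r by ring,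
    sum_range_add f, sum_range_add g, sum_congr rfl hhigh, sum_range_succ, sum_range_succ f,
    sum_range_succ g, sum_congr rfl hlow, hmid]
  simp only [f]
  ring

lemma IsDissection.exists_sub_le {s t : ℝ} {n : ℕ} {D : ℕ → ℝ} (hD : IsDissection s t (n + 1) D)
    (hn : 0 < n) : ∃ i < n, D (i + 2) - D i ≤ 2 * (t - s) / n := by
  have htel : ∑ i ∈ range n, (D (i + 2) - D i) = (D (n + 1) - D 1) + (D n - D 0) := by
    rw [← sum_range_sub (fun i => D (i + 1)), ← sum_range_sub D, ← sum_add_distrib]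
    exact sum_congr rfl fun i _ => by ring
  have hsum : ∑ i ∈ range n, (D (i + 2) - D i) ≤ ∑ _i ∈ range n, 2 * (t - s) / n := by
    have h1 := hD.mem_Icc (k := 1) (by omega)
    have hn' := hD.mem_Icc (k := n) (by omega)
    rw [htel, sum_const, card_range, nsmul_eq_mul, mul_div_cancel₀ _ (by positivity), hD.2.1,
      hD.2.2.1]
    linarith [h1.1, hn'.2]
  obtain ⟨i, hi, hle⟩ := exists_le_of_sum_le (nonempty_range_iff.2 hn.ne') hsum
  exact ⟨i, mem_range.1 hi, hle⟩

lemma summable_add_one_rpow_neg {θ : ℝ} (hθ : 1 < θ) :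
    Summable fun n : ℕ => ((n : ℝ) + 1) ^ (-θ) := by
  refine ((summable_nat_add_iff 1).2 (Real.summable_nat_rpow_inv.2 hθ)).congr fun n => ?_
  rw [Real.rpow_neg (by positivity)]
  push_cast
  rfl

noncomputable def youngConst (Cx Cw α β : ℝ) : ℝ :=
  Cx * Cw * 2 ^ (α + β) * ∑' n : ℕ, ((n : ℝ) + 1) ^ (-(α + β))

namespace IsYoungPair

variable {Cx Cw α β : ℝ} {x w : ℝ → ℝ} {s t : ℝ}

lemma youngConst_nonneg {S : Set ℝ} (h : IsYoungPair Cx Cw α β x w S) :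
    0 ≤ youngConst Cx Cw α β := by
  have := h.const_nonneg_left
  have := h.const_nonneg_right
  unfold youngConst
  positivity

lemma exists_abs_riemannSum_sub_dropPoint_le (h : IsYoungPair Cx Cw α β x w (Set.Icc s t))
    {n : ℕ} {D : ℕ → ℝ} (hD : IsDissection s t (n + 1 + 1) D) :
    ∃ i < n + 1, IsDissection s t (n + 1) (dropPoint D (i + 1)) ∧
      |RiemannSum x w (n + 1 + 1) D - RiemannSum x w (n + 1) (dropPoint D (i + 1))| ≤
        Cx * Cw * 2 ^ (α + β) * ((n : ℝ) + 1) ^ (-(α + β)) * (t - s) ^ (α + β) := by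
  obtain ⟨i, hi, hgap⟩ := hD.exists_sub_le n.succ_pos
  push_cast at hgap
  have hmono := hD.strictMonoOn.monotoneOn
  have h01 : D i ≤ D (i + 1) :=
    hmono (Set.mem_Iic.2 (by omega)) (Set.mem_Iic.2 (by omega)) (by omega)
  have h12 : D (i + 1) ≤ D (i + 2) :=
    hmono (Set.mem_Iic.2 (by omega)) (Set.mem_Iic.2 (by omega)) (by omega)
  have hst : 0 ≤ t - s := sub_nonneg.2 hD.lt.le
  refine ⟨i, hi, hD.dropPoint hi, ?_⟩
  rw [riemannSum_dropPoint x w hi D, add_sub_cancel_left]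
  calc _ ≤ Cx * Cw * (D (i + 2) - D i) ^ (α + β) :=
        h.abs_mul_sub_le (hD.mem_Icc (by omega)) (hD.mem_Icc (by omega)) (hD.mem_Icc (by omega))
          h01 h12
    _ ≤ Cx * Cw * (2 * (t - s) / (n + 1)) ^ (α + β) :=
        mul_le_mul_of_nonneg_left (Real.rpow_le_rpow (by linarith) hgap
          (by linarith [h.one_lt_exp_add])) (mul_nonneg h.const_nonneg_left h.const_nonneg_right)
    _ = _ := by
        rw [Real.div_rpow (by positivity) (by positivity), Real.mul_rpow (by norm_num) hst,
          Real.rpow_neg (by positivity)]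
        ring

lemma abs_riemannSum_sub_le_sum (h : IsYoungPair Cx Cw α β x w (Set.Icc s t)) (m : ℕ)
    {D : ℕ → ℝ} (hD : IsDissection s t (m + 1) D) :
    |RiemannSum x w (m + 1) D - x s * (w t - w s)| ≤
      Cx * Cw * 2 ^ (α + β) * (∑ i ∈ range m, ((i : ℝ) + 1) ^ (-(α + β))) * (t - s) ^ (α + β) := by
  induction m generalizing D with
  | zero => simp [RiemannSum, hD.2.1, ← hD.2.2.1]
  | succ n ih =>
    obtain ⟨i, -, hD', hdrop⟩ := h.exists_abs_riemannSum_sub_dropPoint_le hD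
    calc _ ≤ |RiemannSum x w (n + 1 + 1) D - RiemannSum x w (n + 1) (dropPoint D (i + 1))| +
          |RiemannSum x w (n + 1) (dropPoint D (i + 1)) - x s * (w t - w s)| := abs_sub_le _ _ _
      _ ≤ _ := add_le_add hdrop (ih hD')
      _ = _ := by rw [sum_range_succ]; ring

lemma abs_riemannSum_sub_le (h : IsYoungPair Cx Cw α β x w (Set.Icc s t)) {m : ℕ} {D : ℕ → ℝ}
    (hD : IsDissection s t m D) :
    |RiemannSum x w m D - x s * (w t - w s)| ≤ youngConst Cx Cw α β * (t - s) ^ (α + β) := by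
  obtain ⟨n, rfl⟩ := Nat.exists_eq_add_one.2 hD.1
  refine (h.abs_riemannSum_sub_le_sum n hD).trans ?_
  have hC : 0 ≤ Cx * Cw * 2 ^ (α + β) :=
    mul_nonneg (mul_nonneg h.const_nonneg_left h.const_nonneg_right) (by positivity)
  unfold youngConst
  gcongr
  · exact Real.rpow_nonneg (sub_nonneg.2 hD.lt.le) _
  · exact (summable_add_one_rpow_neg h.one_lt_exp_add).sum_le_tsum _ fun _ _ => by positivity

end IsYoungPair

lemma sum_range_eq_sum_sum_Ico {M : Type*} [AddCommMonoid M] (f : ℕ → M) {φ : ℕ → ℕ}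
    (h0 : φ 0 = 0) {m : ℕ} (hφ : ∀ j < m, φ j ≤ φ (j + 1)) :
    ∑ k ∈ range (φ m), f k = ∑ j ∈ range m, ∑ k ∈ Ico (φ j) (φ (j + 1)), f k := by
  induction m with
  | zero => simp [h0]
  | succ n ih =>
    rw [sum_range_succ, ← ih fun j hj => hφ j (by omega),
      sum_range_add_sum_Ico _ (hφ n n.lt_add_one)]

lemma sum_Ico_eq_riemannSum (x w : ℝ → ℝ) (F : ℕ → ℝ) (a b : ℕ) :
    ∑ k ∈ Ico a b, x (F k) * (w (F (k + 1)) - w (F k)) =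
      RiemannSum x w (b - a) fun i => F (a + i) := by
  rw [sum_Ico_eq_sum_range]
  rfl

lemma IsDissection.restrict {s t : ℝ} {q : ℕ} {F : ℕ → ℝ} (hF : IsDissection s t q F) {a b : ℕ}
    (hab : a < b) (hb : b ≤ q) : IsDissection (F a) (F b) (b - a) fun i => F (a + i) :=
  ⟨by omega, by simp, by simp only [Nat.add_sub_cancel' hab.le], fun k hk => hF.2.2.2 _ (by omega)⟩

lemma rpow_le_rpow_sub_one_mul {a δ θ : ℝ} (ha : 0 < a) (haδ : a ≤ δ) (hθ : 1 ≤ θ) :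
    a ^ θ ≤ δ ^ (θ - 1) * a := by
  calc a ^ θ = a ^ (θ - 1) * a := by rw [← Real.rpow_add_one ha.ne', sub_add_cancel]
    _ ≤ δ ^ (θ - 1) * a :=
      mul_le_mul_of_nonneg_right (Real.rpow_le_rpow ha.le haδ (by linarith)) ha.le

def IsRefinement (q : ℕ) (F : ℕ → ℝ) (m : ℕ) (D : ℕ → ℝ) : Prop :=
  ∀ j ≤ m, ∃ k ≤ q, F k = D j

lemma IsRefinement.exists_index {s t : ℝ} {m q : ℕ} {D F : ℕ → ℝ} (h : IsRefinement q F m D)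
    (hD : IsDissection s t m D) (hF : IsDissection s t q F) :
    ∃ φ : ℕ → ℕ, φ 0 = 0 ∧ φ m = q ∧ (∀ j < m, φ j < φ (j + 1)) ∧ ∀ j ≤ m, F (φ j) = D j := by
  choose! φ hφq hφ using h
  have hinj : Set.InjOn F (Set.Iic q) := hF.strictMonoOn.injOn
  refine ⟨φ, ?_, ?_, fun j hj => ?_, hφ⟩
  · exact hinj (hφq 0 (Nat.zero_le _)) (Set.mem_Iic.2 (Nat.zero_le q))
      (by rw [hφ 0 (Nat.zero_le _), hD.2.1, hF.2.1])
  · exact hinj (hφq m le_rfl) (Set.mem_Iic.2 le_rfl) (by rw [hφ m le_rfl, hD.2.2.1, hF.2.2.1])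
  · refine (hF.strictMonoOn.lt_iff_lt (hφq j (by omega)) (hφq (j + 1) hj)).1 ?_
    rw [hφ j (by omega), hφ (j + 1) hj]
    exact hD.2.2.2 j hj

lemma exists_isDissection_of_finset {s t : ℝ} (hst : s < t) (S : Finset ℝ) (hs : s ∈ S)
    (ht : t ∈ S) (hS : ∀ u ∈ S, u ∈ Set.Icc s t) :
    ∃ (q : ℕ) (F : ℕ → ℝ), IsDissection s t q F ∧ ∀ u ∈ S, ∃ k ≤ q, F k = u := by
  set n := S.card with hn_def
  have hn : 1 < n := one_lt_card.2 ⟨s, hs, t, ht, hst.ne⟩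
  set e := S.orderEmbOfFin hn_def.symm
  let F : ℕ → ℝ := fun k => if hk : k < n then e ⟨k, hk⟩ else t
  have hF : ∀ k (hk : k < n), F k = e ⟨k, hk⟩ := fun k hk => dif_pos hk
  refine ⟨n - 1, F, ⟨by omega, ?_, ?_, fun k hk => ?_⟩, fun u hu => ?_⟩
  · rw [hF 0 (by omega), orderEmbOfFin_zero _ (by omega)]
    exact le_antisymm (min'_le S s hs) (hS _ (min'_mem S _)).1
  · rw [hF (n - 1) (by omega), orderEmbOfFin_last _ (by omega)]
    exact le_antisymm (hS _ (max'_mem S _)).2 (le_max' S t ht)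
  · rw [hF k (by omega), hF (k + 1) (by omega)]
    exact e.strictMono (Fin.mk_lt_mk.2 k.lt_add_one)
  · obtain ⟨i, rfl⟩ : u ∈ Set.range e := by rw [range_orderEmbOfFin]; exact hu
    exact ⟨i, by omega, hF i i.isLt⟩

lemma IsDissection.exists_common_refinement {s t : ℝ} {m p : ℕ} {D E : ℕ → ℝ}
    (hD : IsDissection s t m D) (hE : IsDissection s t p E) :
    ∃ (q : ℕ) (F : ℕ → ℝ), IsDissection s t q F ∧ IsRefinement q F m D ∧ IsRefinement q F p E := by
  classical
  have hDS : ∀ j ≤ m, D j ∈ (range (m + 1)).image D ∪ (range (p + 1)).image E :=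
    fun j hj => mem_union_left _ (mem_image_of_mem D (mem_range.2 (by omega)))
  have hES : ∀ j ≤ p, E j ∈ (range (m + 1)).image D ∪ (range (p + 1)).image E :=
    fun j hj => mem_union_right _ (mem_image_of_mem E (mem_range.2 (by omega)))
  obtain ⟨q, F, hF, hFS⟩ := exists_isDissection_of_finset hD.lt _
    (hD.2.1 ▸ hDS 0 (Nat.zero_le m)) (hD.2.2.1 ▸ hDS m le_rfl) (by
      intro u hu
      simp only [mem_union, mem_image, mem_range] at hu
      rcases hu with ⟨j, hj, rfl⟩ | ⟨j, hj, rfl⟩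
      exacts [hD.mem_Icc (by omega), hE.mem_Icc (by omega)])
  exact ⟨q, F, hF, fun j hj => hFS _ (hDS j hj), fun j hj => hFS _ (hES j hj)⟩

namespace IsYoungPair

variable {Cx Cw α β : ℝ} {x w : ℝ → ℝ} {s t : ℝ}

lemma abs_riemannSum_sub_le_of_isRefinement (h : IsYoungPair Cx Cw α β x w (Set.Icc s t))
    {m q : ℕ} {D F : ℕ → ℝ} (hD : IsDissection s t m D) (hF : IsDissection s t q F)
    (href : IsRefinement q F m D) {δ : ℝ} (hδ : ∀ k < m, D (k + 1) - D k ≤ δ) :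
    |RiemannSum x w q F - RiemannSum x w m D| ≤
      youngConst Cx Cw α β * δ ^ (α + β - 1) * (t - s) := by
  obtain ⟨φ, hφ0, hφm, hφ, hFφ⟩ := href.exists_index hD hF
  have hφq : ∀ j ≤ m, φ j ≤ q := fun j hj => hφm ▸ (strictMonoOn_Iic_of_lt_succ hφ).monotoneOn
    (Set.mem_Iic.2 hj) (Set.mem_Iic.2 le_rfl) hj
  have hblock : ∀ j < m,
      |RiemannSum x w (φ (j + 1) - φ j) (fun i => F (φ j + i)) -
          x (D j) * (w (D (j + 1)) - w (D j))| ≤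
        youngConst Cx Cw α β * δ ^ (α + β - 1) * (D (j + 1) - D j) := by
    intro j hj
    have hB := hF.restrict (hφ j hj) (hφq _ hj)
    rw [hFφ j hj.le, hFφ (j + 1) hj] at hB
    have hsub : Set.Icc (D j) (D (j + 1)) ⊆ Set.Icc s t :=
      Set.Icc_subset_Icc (hD.mem_Icc hj.le).1 (hD.mem_Icc hj).2
    refine ((h.mono hsub).abs_riemannSum_sub_le hB).trans ?_
    rw [mul_assoc]
    exact mul_le_mul_of_nonneg_left (rpow_le_rpow_sub_one_mul (sub_pos.2 (hD.2.2.2 j hj))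
      (hδ j hj) h.one_lt_exp_add.le) h.youngConst_nonneg
  rw [RiemannSum, ← hφm, sum_range_eq_sum_sum_Ico _ hφ0 fun j hj => (hφ j hj).le, RiemannSum,
    ← sum_sub_distrib]
  simp only [sum_Ico_eq_riemannSum]
  calc _ ≤ ∑ j ∈ range m, |RiemannSum x w (φ (j + 1) - φ j) (fun i => F (φ j + i)) -
          x (D j) * (w (D (j + 1)) - w (D j))| := abs_sum_le_sum_abs _ _
    _ ≤ ∑ j ∈ range m, youngConst Cx Cw α β * δ ^ (α + β - 1) * (D (j + 1) - D j) :=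
        sum_le_sum fun j hj => hblock j (mem_range.1 hj)
    _ = youngConst Cx Cw α β * δ ^ (α + β - 1) * (t - s) := by
        rw [← mul_sum, sum_range_sub, hD.2.2.1, hD.2.1]

lemma abs_riemannSum_sub_riemannSum_le (h : IsYoungPair Cx Cw α β x w (Set.Icc s t))
    {m p : ℕ} {D E : ℕ → ℝ} (hD : IsDissection s t m D) (hE : IsDissection s t p E)
    {δ δ' : ℝ} (hδ : ∀ k < m, D (k + 1) - D k ≤ δ) (hδ' : ∀ k < p, E (k + 1) - E k ≤ δ') :
    |RiemannSum x w m D - RiemannSum x w p E| ≤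
      youngConst Cx Cw α β * (δ ^ (α + β - 1) + δ' ^ (α + β - 1)) * (t - s) := by
  obtain ⟨q, F, hF, hFD, hFE⟩ := hD.exists_common_refinement hE
  calc |RiemannSum x w m D - RiemannSum x w p E|
      = |(RiemannSum x w q F - RiemannSum x w p E) -
          (RiemannSum x w q F - RiemannSum x w m D)| := by ring_nf
    _ ≤ |RiemannSum x w q F - RiemannSum x w p E| + |RiemannSum x w q F - RiemannSum x w m D| :=
        abs_sub _ _
    _ ≤ youngConst Cx Cw α β * δ' ^ (α + β - 1) * (t - s) +
        youngConst Cx Cw α β * δ ^ (α + β - 1) * (t - s) :=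
        add_le_add (h.abs_riemannSum_sub_le_of_isRefinement hE hF hFE hδ')
          (h.abs_riemannSum_sub_le_of_isRefinement hD hF hFD hδ)
    _ = _ := by ring

end IsYoungPair

lemma tendsto_div_add_one (c : ℝ) : Tendsto (fun n : ℕ => c / ((n : ℝ) + 1)) atTop (𝓝 0) := by
  simpa [div_eq_mul_inv] using tendsto_one_div_add_atTop_nhds_zero_nat.const_mul c

lemma tendsto_mul_rpow_mul_nhds_zero (K L : ℝ) {γ : ℝ} (hγ : 0 < γ) :
    Tendsto (fun δ : ℝ => K * δ ^ γ * L) (𝓝 0) (𝓝 0) := by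
  simpa [Real.zero_rpow hγ.ne'] using
    ((Real.continuousAt_rpow_const 0 γ (Or.inr hγ.le)).tendsto.const_mul K).mul_const L

def MeshTendstoZero (m : ℕ → ℕ) (D : ℕ → ℕ → ℝ) : Prop :=
  ∀ ε > 0, ∃ N : ℕ, ∀ n ≥ N, ∀ k < m n, D n (k + 1) - D n k < ε

lemma MeshTendstoZero.of_le {m : ℕ → ℕ} {D : ℕ → ℕ → ℝ} {δ : ℕ → ℝ}
    (hδ : Tendsto δ atTop (𝓝 0)) (h : ∀ n, ∀ k < m n, D n (k + 1) - D n k ≤ δ n) :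
    MeshTendstoZero m D := fun _ hε =>
  let ⟨N, hN⟩ := eventually_atTop.1 (hδ.eventually (eventually_lt_nhds hε))
  ⟨N, fun n hn k hk => (h n k hk).trans_lt (hN n hn)⟩

noncomputable def unifDissection (s t : ℝ) (n k : ℕ) : ℝ := s + (t - s) * k / (n + 1)

lemma unifDissection_succ_sub (s t : ℝ) (n k : ℕ) :
    unifDissection s t n (k + 1) - unifDissection s t n k = (t - s) / (n + 1) := by
  simp only [unifDissection]
  push_cast
  ring

lemma isDissection_unifDissection {s t : ℝ} (hst : s < t) (n : ℕ) :
    IsDissection s t (n + 1) (unifDissection s t n) := by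
  refine ⟨n.succ_pos, by simp [unifDissection], ?_, fun k _ => ?_⟩
  · simp only [unifDissection]
    push_cast
    field_simp
    ring
  · linarith [unifDissection_succ_sub s t n k,
      div_pos (sub_pos.2 hst) (n.cast_add_one_pos : (0 : ℝ) < n + 1)]

lemma meshTendstoZero_unifDissection (s t : ℝ) :
    MeshTendstoZero (fun n => n + 1) (unifDissection s t) :=
  .of_le (tendsto_div_add_one (t - s)) fun n k _ => (unifDissection_succ_sub s t n k).le

noncomputable def youngIntegral (x w : ℝ → ℝ) (s t : ℝ) : ℝ :=
  limUnder atTop fun n => RiemannSum x w (n + 1) (unifDissection s t n)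

lemma youngIntegral_self (x w : ℝ → ℝ) (s : ℝ) : youngIntegral x w s s = 0 := by
  simp [youngIntegral, unifDissection, RiemannSum, tendsto_const_nhds.limUnder_eq]

def concatDissection (m : ℕ) (D E : ℕ → ℝ) (k : ℕ) : ℝ := if k ≤ m then D k else E (k - m)

section Concat

variable {m p : ℕ} {D E : ℕ → ℝ}

lemma concatDissection_of_le_left {k : ℕ} (hk : k ≤ m) : concatDissection m D E k = D k :=
  if_pos hk

lemma concatDissection_of_le_right (hDE : D m = E 0) {k : ℕ} (hk : m ≤ k) :
    concatDissection m D E k = E (k - m) := by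
  unfold concatDissection
  split_ifs with h
  · obtain rfl : k = m := le_antisymm h hk
    simp [hDE]
  · rfl

lemma concatDissection_succ_sub (hDE : D m = E 0) (k : ℕ) :
    concatDissection m D E (k + 1) - concatDissection m D E k =
      if k < m then D (k + 1) - D k else E (k - m + 1) - E (k - m) := by
  split_ifs with hk
  · rw [concatDissection_of_le_left hk, concatDissection_of_le_left hk.le]
  · rw [concatDissection_of_le_right hDE (by omega), concatDissection_of_le_right hDE (by omega),
      Nat.sub_add_comm (by omega)]

lemma IsDissection.concat {r s t : ℝ} (hD : IsDissection r s m D) (hE : IsDissection s t p E) :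
    IsDissection r t (m + p) (concatDissection m D E) := by
  have hDE : D m = E 0 := hD.2.2.1.trans hE.2.1.symm
  refine ⟨by have := hD.1; omega, by simp [concatDissection, hD.2.1], ?_, fun k hk => ?_⟩
  · rw [concatDissection_of_le_right hDE (by omega), Nat.add_sub_cancel_left, hE.2.2.1]
  · have := concatDissection_succ_sub hDE k
    split_ifs at this with hkm
    · linarith [hD.2.2.2 k hkm]
    · linarith [hE.2.2.2 (k - m) (by omega)]

lemma riemannSum_concatDissection (x w : ℝ → ℝ) (hDE : D m = E 0) :
    RiemannSum x w (m + p) (concatDissection m D E) = RiemannSum x w m D + RiemannSum x w p E := by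
  rw [RiemannSum, sum_range_add]
  congr 1
  · refine sum_congr rfl fun k hk => ?_
    have := mem_range.1 hk
    rw [concatDissection_of_le_left this.le, concatDissection_of_le_left this]
  · refine sum_congr rfl fun k _ => ?_
    rw [concatDissection_of_le_right hDE (by omega), concatDissection_of_le_right hDE (by omega),
      Nat.add_sub_cancel_left, show m + k + 1 - m = k + 1 by omega]

end Concat

lemma IsYoungPrimitive.eqOn {T : ℝ} {x w J₁ J₂ : ℝ → ℝ} (h₁ : IsYoungPrimitive T x w J₁)
    (h₂ : IsYoungPrimitive T x w J₂) : Set.EqOn J₁ J₂ (Set.Icc 0 T) := by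
  intro t ht
  rcases ht.1.eq_or_lt with rfl | ht0
  · rw [h₁.2.1, h₂.2.1]
  · have hD := isDissection_unifDissection ht0
    have hmesh := meshTendstoZero_unifDissection 0 t
    have := tendsto_nhds_unique (h₁.2.2 0 t le_rfl ht0 ht.2 _ _ hD hmesh)
      (h₂.2.2 0 t le_rfl ht0 ht.2 _ _ hD hmesh)
    rw [h₁.2.1, h₂.2.1] at this
    linarith

namespace IsYoungPair

variable {Cx Cw α β : ℝ} {x w : ℝ → ℝ} {s t : ℝ}

lemma cauchySeq_riemannSum_unifDissection (h : IsYoungPair Cx Cw α β x w (Set.Icc s t))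
    (hst : s < t) : CauchySeq fun n => RiemannSum x w (n + 1) (unifDissection s t n) := by
  set e : ℕ → ℝ := fun n => youngConst Cx Cw α β * ((t - s) / (n + 1)) ^ (α + β - 1) * (t - s)
  have he : Tendsto e atTop (𝓝 0) :=
    (tendsto_mul_rpow_mul_nhds_zero _ _ (by linarith [h.one_lt_exp_add])).comp
      (tendsto_div_add_one _)
  refine Metric.cauchySeq_iff.2 fun ε hε => ?_
  obtain ⟨N, hN⟩ := eventually_atTop.1 (he.eventually (eventually_lt_nhds (half_pos hε)))
  refine ⟨N, fun m hm n hn => ?_⟩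
  rw [Real.dist_eq]
  calc _ ≤ youngConst Cx Cw α β * (((t - s) / (m + 1)) ^ (α + β - 1) +
          ((t - s) / (n + 1)) ^ (α + β - 1)) * (t - s) :=
        h.abs_riemannSum_sub_riemannSum_le (isDissection_unifDissection hst m)
          (isDissection_unifDissection hst n) (fun k _ => (unifDissection_succ_sub s t m k).le)
          (fun k _ => (unifDissection_succ_sub s t n k).le)
    _ = e m + e n := by ring
    _ < ε := by linarith [hN m hm, hN n hn]

lemma abs_riemannSum_sub_youngIntegral_le (h : IsYoungPair Cx Cw α β x w (Set.Icc s t))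
    {m : ℕ} {D : ℕ → ℝ} (hD : IsDissection s t m D) {δ : ℝ}
    (hδ : ∀ k < m, D (k + 1) - D k ≤ δ) :
    |RiemannSum x w m D - youngIntegral x w s t| ≤
      youngConst Cx Cw α β * δ ^ (α + β - 1) * (t - s) := by
  have hst := hD.lt
  have hlim := (tendsto_const_nhds (x := RiemannSum x w m D)).sub
    (h.cauchySeq_riemannSum_unifDissection hst).tendsto_limUnder |>.abs
  have hbound := (tendsto_const_nhds (x := youngConst Cx Cw α β * δ ^ (α + β - 1) * (t - s))).add
    ((tendsto_mul_rpow_mul_nhds_zero (youngConst Cx Cw α β) (t - s) (γ := α + β - 1)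
      (by linarith [h.one_lt_exp_add])).comp (tendsto_div_add_one (t - s)))
  rw [add_zero] at hbound
  refine le_of_tendsto_of_tendsto' hlim hbound fun n => ?_
  refine (h.abs_riemannSum_sub_riemannSum_le hD (isDissection_unifDissection hst n) hδ
    fun k _ => (unifDissection_succ_sub s t n k).le).trans_eq ?_
  simp only [Function.comp]
  ring

lemma abs_youngIntegral_sub_le (h : IsYoungPair Cx Cw α β x w (Set.Icc s t)) (hst : s < t) :
    |youngIntegral x w s t - x s * (w t - w s)| ≤ youngConst Cx Cw α β * (t - s) ^ (α + β) := by
  have := h.abs_riemannSum_sub_youngIntegral_le (isDissection_unifDissection hst 0) (δ := t - s)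
    fun k _ => by simp [unifDissection_succ_sub]
  rwa [abs_sub_comm, mul_assoc, ← Real.rpow_add_one (sub_pos.2 hst).ne', sub_add_cancel,
    show RiemannSum x w (0 + 1) (unifDissection s t 0) = x s * (w t - w s) by
      simp [RiemannSum, unifDissection]] at this

lemma tendsto_riemannSum_youngIntegral (h : IsYoungPair Cx Cw α β x w (Set.Icc s t))
    {m : ℕ → ℕ} {D : ℕ → ℕ → ℝ} (hD : ∀ n, IsDissection s t (m n) (D n))
    (hmesh : MeshTendstoZero m D) :
    Tendsto (fun n => RiemannSum x w (m n) (D n)) atTop (𝓝 (youngIntegral x w s t)) := by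
  refine Metric.tendsto_atTop.2 fun ε hε => ?_
  obtain ⟨δ, hδ, hδε⟩ := ((tendsto_mul_rpow_mul_nhds_zero (youngConst Cx Cw α β) (t - s)
    (γ := α + β - 1) (by linarith [h.one_lt_exp_add])).eventually (eventually_lt_nhds hε)).exists_gt
  obtain ⟨N, hN⟩ := hmesh δ hδ
  exact ⟨N, fun n hn => (h.abs_riemannSum_sub_youngIntegral_le (hD n)
    fun k hk => (hN n hn k hk).le).trans_lt hδε⟩

lemma youngIntegral_add {r : ℝ} (h : IsYoungPair Cx Cw α β x w (Set.Icc r t)) (hrs : r < s)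
    (hst : s < t) : youngIntegral x w r s + youngIntegral x w s t = youngIntegral x w r t := by
  have hD := isDissection_unifDissection hrs
  have hE := isDissection_unifDissection hst
  have hmesh : MeshTendstoZero (fun n => (n + 1) + (n + 1))
      fun n => concatDissection (n + 1) (unifDissection r s n) (unifDissection s t n) := by
    refine .of_le (tendsto_div_add_one (t - r)) fun n k _ => ?_
    rw [concatDissection_succ_sub ((hD n).2.2.1.trans (hE n).2.1.symm)]
    split_ifs <;> rw [unifDissection_succ_sub] <;> gcongr
  have hconcat := h.tendsto_riemannSum_youngIntegral (fun n => (hD n).concat (hE n)) hmesh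
  have hsum := ((h.mono (Set.Icc_subset_Icc le_rfl hst.le)).cauchySeq_riemannSum_unifDissection
    hrs).tendsto_limUnder.add
    ((h.mono (Set.Icc_subset_Icc hrs.le le_rfl)).cauchySeq_riemannSum_unifDissection
      hst).tendsto_limUnder
  refine tendsto_nhds_unique (hsum.congr fun n => ?_) hconcat
  exact (riemannSum_concatDissection x w ((hD n).2.2.1.trans (hE n).2.1.symm)).symm

lemma youngIntegral_sub {T : ℝ} (h : IsYoungPair Cx Cw α β x w (Set.Icc 0 T)) (hs : 0 ≤ s)
    (hst : s < t) (ht : t ≤ T) :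
    youngIntegral x w 0 t - youngIntegral x w 0 s = youngIntegral x w s t := by
  rcases hs.eq_or_lt with rfl | hs
  · rw [youngIntegral_self, sub_zero]
  · rw [← (h.mono (Set.Icc_subset_Icc le_rfl ht)).youngIntegral_add hs hst]
    ring

lemma isHolderOn_youngIntegral {T : ℝ} (h : IsYoungPair Cx Cw α β x w (Set.Icc 0 T))
    (hβ : 0 < β) {B : ℝ} (hB : ∀ u ∈ Set.Icc 0 T, |x u| ≤ B) :
    IsHolderOn (B * Cw + youngConst Cx Cw α β * T ^ α) β (fun t => youngIntegral x w 0 t)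
      (Set.Icc 0 T) := by
  refine IsHolderOn.of_le hβ fun s hs t ht hst => ?_
  have hI := (h.mono (Set.Icc_subset_Icc hs.1 ht.2)).abs_youngIntegral_sub_le hst
  have hw := h.holder_right.abs_sub_le_of_le h.const_nonneg_right h.exp_nonneg_right hs ht
    hst.le le_rfl
  have hθ : (t - s) ^ (α + β) ≤ T ^ α * (t - s) ^ β := by
    rw [Real.rpow_add_of_nonneg (sub_nonneg.2 hst.le) h.exp_nonneg_left h.exp_nonneg_right]
    exact mul_le_mul_of_nonneg_right
      (Real.rpow_le_rpow (sub_nonneg.2 hst.le) (by linarith [hs.1, ht.2]) h.exp_nonneg_left)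
      (Real.rpow_nonneg (sub_nonneg.2 hst.le) _)
  simp only [h.youngIntegral_sub hs.1 hst ht.2]
  calc |youngIntegral x w s t|
      = |x s * (w t - w s) + (youngIntegral x w s t - x s * (w t - w s))| := by
        rw [add_sub_cancel]
    _ ≤ |x s * (w t - w s)| + |youngIntegral x w s t - x s * (w t - w s)| := abs_add_le _ _
    _ ≤ B * (Cw * (t - s) ^ β) + youngConst Cx Cw α β * (T ^ α * (t - s) ^ β) := by
        rw [abs_mul]
        exact add_le_add (mul_le_mul (hB s hs) hw (abs_nonneg _) ((abs_nonneg _).trans (hB s hs)))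
          (hI.trans (mul_le_mul_of_nonneg_left hθ h.youngConst_nonneg))
    _ = _ := by ring

end IsYoungPair

theorem young_integral_exists_unique_general
    (T : ℝ) (x w : ℝ → ℝ) (α β : ℝ)
    (hα : α ∈ Set.Ioc (0 : ℝ) 1) (hβ : β ∈ Set.Ioc (0 : ℝ) 1) (hαβ : 1 < α + β)
    (Cx Cw : ℝ) (hCx : 0 ≤ Cx) (hCw : 0 ≤ Cw)
    (hx : ∀ s ∈ Set.Icc (0 : ℝ) T, ∀ t ∈ Set.Icc (0 : ℝ) T, |x t - x s| ≤ Cx * |t - s| ^ α)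
    (hw : ∀ s ∈ Set.Icc (0 : ℝ) T, ∀ t ∈ Set.Icc (0 : ℝ) T, |w t - w s| ≤ Cw * |t - s| ^ β) :
    (∃ J : ℝ → ℝ, IsYoungPrimitive T x w J) ∧
      ∀ J₁ J₂ : ℝ → ℝ, IsYoungPrimitive T x w J₁ → IsYoungPrimitive T x w J₂ →
        Set.EqOn J₁ J₂ (Set.Icc 0 T) := by
  have h : IsYoungPair Cx Cw α β x w (Set.Icc 0 T) := ⟨hx, hw, hCx, hCw, hα.1.le, hβ.1.le, hαβ⟩
  have hJ := h.isHolderOn_youngIntegral hβ.1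
    fun u hu => h.holder_left.abs_le_of_mem_Icc hCx hα.1.le hu
  refine ⟨⟨fun t => youngIntegral x w 0 t, hJ.continuousOn hβ.1, youngIntegral_self x w 0,
    fun s t hs hst ht m D hD hmesh => ?_⟩, fun J₁ J₂ h₁ h₂ => h₁.eqOn h₂⟩
  rw [h.youngIntegral_sub hs hst ht]
  exact (h.mono (Set.Icc_subset_Icc hs ht)).tendsto_riemannSum_youngIntegral hD hmesh

/-- Existence and uniqueness of the Young integral of an `α`-Hölder function with respect to a
`β`-Hölder function when `α + β > 1`. -/
theorem young_integral_exists_unique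
    (T : ℝ) (hT : 0 < T) (x w : ℝ → ℝ) (α β : ℝ)
    (hα : α ∈ Set.Ioc (0 : ℝ) 1) (hβ : β ∈ Set.Ioc (0 : ℝ) 1) (hαβ : 1 < α + β)
    (Cx Cw : ℝ) (hCx : 0 ≤ Cx) (hCw : 0 ≤ Cw)
    (hx : ∀ s ∈ Set.Icc (0 : ℝ) T, ∀ t ∈ Set.Icc (0 : ℝ) T, |x t - x s| ≤ Cx * |t - s| ^ α)
    (hw : ∀ s ∈ Set.Icc (0 : ℝ) T, ∀ t ∈ Set.Icc (0 : ℝ) T, |w t - w s| ≤ Cw * |t - s| ^ β) :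
    (∃ J : ℝ → ℝ, IsYoungPrimitive T x w J) ∧
      ∀ J₁ J₂ : ℝ → ℝ, IsYoungPrimitive T x w J₁ → IsYoungPrimitive T x w J₂ →
        Set.EqOn J₁ J₂ (Set.Icc 0 T) :=
  young_integral_exists_unique_general T x w α β hα hβ hαβ Cx Cw hCx hCw hx hw
end

section
/- Let b ∈ C¹(ℝ) with m ≤ b'(y) for all y ∈ ℝ, let ε > 0, and let X_x and X_{x+ε} be continuous solutions on [0,T] of the equation driven by the same continuous path w with initial conditions x and x + ε respectively. Then X_{x+ε}(s) − X_x(s) ≥ ε e^{m s} > 0 for every s ∈ [0,T]; in particular the two solution paths never meet. -/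
/-!
The noise cancels in the difference `Z = X_{x+ε} - X_x`, which is therefore a C¹ function
with `Z' = b(X_{x+ε}) - b(X_x)`. Since `y ↦ b y - m y` is monotone, `Z' ≥ m Z` wherever
`Z > 0`, and a fencing argument starting from `Z 0 = ε > 0` shows that `Z` stays above
`ε e^{m t}`.
-/

open MeasureTheory

/-- `X` is a (continuous) solution on `[0, T]` of the equation
`X t = x₀ + ∫₀ᵗ b (X s) ds + σ * w t`. -/
def IsSolution (T σ x₀ : ℝ) (b w X : ℝ → ℝ) : Prop :=
  ContinuousOn X (Set.Icc 0 T) ∧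
    ∀ t ∈ Set.Icc (0 : ℝ) T, X t = x₀ + (∫ s in (0 : ℝ)..t, b (X s)) + σ * w t

open Set Filter Topology

theorem exp_mul_sub_le_of_mul_le_deriv_right {Z Z' : ℝ → ℝ} {a c ε m : ℝ}
    (hZ : ContinuousOn Z (Icc a c)) (hZ' : ∀ t ∈ Ico a c, HasDerivWithinAt Z (Z' t) (Ici t) t)
    (hε : 0 < ε) (ha : ε ≤ Z a) (hgrowth : ∀ t ∈ Ico a c, 0 < Z t → m * Z t ≤ Z' t) :
    ∀ t ∈ Icc a c, ε * Real.exp (m * (t - a)) ≤ Z t := by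
  -- Fencing needs a strict inequality at contact points, so first compare with the slower
  -- rates `m - δ`.
  have slower : ∀ δ > 0, ∀ t ∈ Icc a c, ε * Real.exp ((m - δ) * (t - a)) ≤ Z t := by
    intro δ hδ
    have hderiv (t : ℝ) : HasDerivAt (fun t => ε * Real.exp ((m - δ) * (t - a)))
        ((m - δ) * (ε * Real.exp ((m - δ) * (t - a)))) t := by
      refine ((((hasDerivAt_id t).sub_const a).const_mul (m - δ)).exp.const_mul ε).congr_deriv ?_
      simp only [id]; ring
    refine image_le_of_deriv_right_lt_deriv_boundary' (by fun_prop)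
      (fun t _ => (hderiv t).hasDerivWithinAt) (by simpa using ha) hZ hZ' ?_
    intro t ht hcontact
    have hpos : 0 < Z t := hcontact ▸ by positivity
    have hgrowth_t := hgrowth t ht hpos
    rw [hcontact]
    nlinarith
  intro t ht
  have hcont : Continuous fun δ : ℝ => ε * Real.exp ((m - δ) * (t - a)) := by fun_prop
  refine le_of_tendsto (x := 𝓝[>] 0) ?_
    (eventually_nhdsWithin_of_forall fun δ hδ => slower δ hδ t ht)
  simpa using (hcont.tendsto 0).mono_left nhdsWithin_le_nhds

theorem ContinuousOn.hasDerivWithinAt_integral_Ici {g : ℝ → ℝ} {a c t : ℝ}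
    (hg : ContinuousOn g (Icc a c)) (ht : t ∈ Ico a c) :
    HasDerivWithinAt (fun u => ∫ s in a..u, g s) (g t) (Ici t) t := by
  have hnhds : Icc a c ∈ 𝓝[>] t := Icc_mem_nhdsGT_of_mem ht
  refine intervalIntegral.integral_hasDerivWithinAt_right ?_
    ((hg.stronglyMeasurableAtFilter_nhdsWithin measurableSet_Icc t).filter_mono
      (nhdsWithin_le_of_mem hnhds))
    ((hg.continuousWithinAt (Ico_subset_Icc_self ht)).mono_of_mem_nhdsWithin hnhds)
  exact (hg.mono (uIcc_subset_Icc (left_mem_Icc.2 (ht.1.trans ht.2.le)) (Ico_subset_Icc_self ht)))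
    |>.intervalIntegrable

namespace IsSolution

variable {T σ x₀ x₁ : ℝ} {b w X Y : ℝ → ℝ}

theorem sub_eq_integral (hb : Continuous b) (hX : IsSolution T σ x₀ b w X)
    (hY : IsSolution T σ x₁ b w Y) :
    ∀ t ∈ Icc 0 T, Y t - X t = x₁ - x₀ + ∫ s in (0 : ℝ)..t, (b (Y s) - b (X s)) := by
  intro t ht
  have hint {Z : ℝ → ℝ} (hZ : ContinuousOn Z (Icc 0 T)) :
      IntervalIntegrable (fun s => b (Z s)) volume 0 t :=
    (hb.comp_continuousOn hZ |>.mono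
      (uIcc_subset_Icc (left_mem_Icc.2 (ht.1.trans ht.2)) ht)).intervalIntegrable
  rw [intervalIntegral.integral_sub (hint hY.1) (hint hX.1), hX.2 t ht, hY.2 t ht]
  ring

theorem hasDerivWithinAt_sub (hb : Continuous b) (hX : IsSolution T σ x₀ b w X)
    (hY : IsSolution T σ x₁ b w Y) :
    ∀ t ∈ Ico 0 T, HasDerivWithinAt (fun t => Y t - X t) (b (Y t) - b (X t)) (Ici t) t := by
  intro t ht
  have hcont : ContinuousOn (fun s => b (Y s) - b (X s)) (Icc 0 T) :=
    (hb.comp_continuousOn hY.1).sub (hb.comp_continuousOn hX.1)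
  refine ((hcont.hasDerivWithinAt_integral_Ici ht).const_add (x₁ - x₀)).congr_of_eventuallyEq ?_
    (sub_eq_integral hb hX hY t (Ico_subset_Icc_self ht))
  filter_upwards [nhdsWithin_le_of_mem (Icc_mem_nhdsGE_of_mem ht) self_mem_nhdsWithin] with s hs
  exact sub_eq_integral hb hX hY s hs

end IsSolution

theorem diff_solutions_lower_bound_general (T σ x ε m : ℝ) (hε : 0 < ε)
    (w b : ℝ → ℝ)
    (hb : ContDiff ℝ 1 b) (hm : ∀ y : ℝ, m ≤ deriv b y)
    (X Xε : ℝ → ℝ) (hX : IsSolution T σ x b w X) (hXε : IsSolution T σ (x + ε) b w Xε) :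
    ∀ s ∈ Set.Icc (0 : ℝ) T,
      ε * Real.exp (m * s) ≤ Xε s - X s ∧ 0 < ε * Real.exp (m * s) := by
  intro s hs
  have hb' : Differentiable ℝ b := hb.differentiable one_ne_zero
  have hinit : Xε 0 - X 0 = ε := by
    rw [hX.sub_eq_integral hb'.continuous hXε 0 (left_mem_Icc.2 (hs.1.trans hs.2))]
    simp
  have hgrowth (t : ℝ) (_ : t ∈ Ico 0 T) (hpos : 0 < Xε t - X t) :
      m * (Xε t - X t) ≤ b (Xε t) - b (X t) :=
    mul_sub_le_image_sub_of_le_deriv hb' hm (sub_pos.1 hpos).le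
  refine ⟨?_, by positivity⟩
  simpa using exp_mul_sub_le_of_mul_le_deriv_right (hXε.1.sub hX.1)
    (hX.hasDerivWithinAt_sub hb'.continuous hXε) hε hinit.ge hgrowth s hs

/-- If `b ∈ C¹(ℝ)` with `m ≤ b'`, then two solutions driven by the same path with initial
conditions `x` and `x + ε` satisfy `X_{x+ε}(s) - X_x(s) ≥ ε e^{m s} > 0` on `[0, T]`;
in particular the two solution paths never meet. -/
theorem diff_solutions_lower_bound (T σ x ε m : ℝ) (hT : 0 < T) (hε : 0 < ε)
    (w b : ℝ → ℝ) (hw : ContinuousOn w (Set.Icc 0 T))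
    (hb : ContDiff ℝ 1 b) (hm : ∀ y : ℝ, m ≤ deriv b y)
    (X Xε : ℝ → ℝ) (hX : IsSolution T σ x b w X) (hXε : IsSolution T σ (x + ε) b w Xε) :
    ∀ s ∈ Set.Icc (0 : ℝ) T,
      ε * Real.exp (m * s) ≤ Xε s - X s ∧ 0 < ε * Real.exp (m * s) :=
  diff_solutions_lower_bound_general T σ x ε m hε w b hb hm X Xε hX hXε
end

section
/- Let b ∈ C²(ℝ) with m ≤ b'(y) ≤ M for all y ∈ ℝ and with bounded second derivative, let ε > 0, let t ∈ (0,T], and let X_x and X_{x+ε} be continuous solutions on [0,T] of the equation driven by the same continuous path w with initial conditions x and x + ε. Then for all 0 ≤ v < u ≤ t, | exp( ∫_v^u b'(X_x(r)) dr ) − (X_{x+ε}(u) − X_x(u))/(X_{x+ε}(v) − X_x(v)) | ≤ (‖b''‖_∞ / 2) · ε · (1 ∨ e^{M t}) · 𝔪_M(u,v), where 𝔪_M(u,v) := −(1/M) e^{M v} if M < 0, 𝔪_M(u,v) := u − v if M = 0, and 𝔪_M(u,v) := (1/M) e^{M u} if M > 0. -/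
/-!
The noise cancels in `Z = X_{x+ε} - X_x`, which solves `Z' = b'(X_x) Z + R` with a Taylor
remainder `|R| ≤ ‖b''‖_∞ Z² / 2`. Since `b` is Lipschitz, `Z` stays positive, and since `b' ≤ M`,
`Z` grows at most like `e^{M r}`. Variation of constants gives
`exp (∫ᵥᵘ b'(X_x)) - Z u / Z v = -(1 / Z v) ∫ᵥᵘ exp (∫ᵣᵘ b'(X_x)) R(r) dr`, and bounding `Z r²` by
`ε e^{M r} · Z v e^{M (r - v)}` leaves `(‖b''‖_∞ / 2) ε e^{M (u - v)} ∫ᵥᵘ e^{M r} dr`, where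
`e^{M (u - v)} ≤ 1 ∨ e^{M t}` and `∫ᵥᵘ e^{M r} dr ≤ 𝔪_M(u, v)`.
-/

open MeasureTheory

/-- The kernel `𝔪_M(u, v)`. -/
noncomputable def mMfun (M u v : ℝ) : ℝ :=
  if M < 0 then -(1 / M) * Real.exp (M * v)
  else if M = 0 then u - v
  else (1 / M) * Real.exp (M * u)

open Set Real

theorem abs_sub_sub_deriv_mul_le {b : ℝ → ℝ} {K a c : ℝ} (hb : Differentiable ℝ b)
    (hb' : Differentiable ℝ (deriv b)) (hK : ∀ y, |deriv (deriv b) y| ≤ K) (hac : a ≤ c) :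
    |b c - b a - deriv b a * (c - a)| ≤ K / 2 * (c - a) ^ 2 := by
  have hlip : ∀ y, |deriv b y - deriv b a| ≤ K * |y - a| := fun y =>
    convex_univ.norm_image_sub_le_of_norm_deriv_le (fun z _ => hb' z) (fun z _ => hK z)
      trivial trivial
  have hB : ∀ y, HasDerivAt (fun y => K / 2 * (y - a) ^ 2) (K * (y - a)) y := fun y =>
    ((((hasDerivAt_id y).sub_const a).pow 2).const_mul (K / 2)).congr_deriv (by simp; ring)
  refine image_norm_le_of_norm_deriv_right_le_deriv_boundary
    (f := fun y => b y - b a - deriv b a * (y - a)) (f' := fun y => deriv b y - deriv b a)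
    (hb.continuous.continuousOn.sub continuous_const.continuousOn |>.sub (by fun_prop))
    (fun y _ => ?_) (by simp) hB (fun y hy => ?_) (right_mem_Icc.2 hac)
  · exact (((hb y).hasDerivAt.sub_const (b a)).sub
      (((hasDerivAt_id y).sub_const a).const_mul (deriv b a)) |>.congr_deriv
      (by simp)).hasDerivWithinAt
  · simpa [abs_of_nonneg (sub_nonneg.2 hy.1)] using hlip y

theorem pos_of_hasDerivAt_of_abs_le_mul_abs {Z f : ℝ → ℝ} {a c L : ℝ}
    (hZ : ContinuousOn Z (Icc a c)) (hZ' : ∀ r ∈ Ioo a c, HasDerivAt Z (f r) r)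
    (hf : ∀ r ∈ Ioo a c, |f r| ≤ L * |Z r|) (ha : 0 < Z a) : ∀ r ∈ Icc a c, 0 < Z r := by
  have hmono : MonotoneOn (fun r => Z r ^ 2 * exp (2 * L * r)) (Icc a c) := by
    refine monotoneOn_of_hasDerivWithinAt_nonneg (convex_Icc a c)
      (hZ.pow 2 |>.mul (by fun_prop))
      (f' := fun r => 2 * exp (2 * L * r) * (Z r * f r + L * Z r ^ 2))
      (fun r hr => ?_) (fun r hr => ?_)
    · rw [interior_Icc] at hr
      exact (((hZ' r hr).pow 2).mul ((hasDerivAt_id r).const_mul (2 * L)).exp).congr_deriv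
        (by simp; ring) |>.hasDerivWithinAt
    · rw [interior_Icc] at hr
      have : -(L * Z r ^ 2) ≤ Z r * f r := by
        have := mul_le_mul_of_nonneg_left (hf r hr) (abs_nonneg (Z r))
        rw [← abs_mul, mul_left_comm, ← sq, sq_abs] at this
        exact neg_le_of_abs_le this
      have : 0 ≤ Z r * f r + L * Z r ^ 2 := by linarith
      positivity
  have hne : ∀ r ∈ Icc a c, Z r ≠ 0 := fun r hr h0 => by
    have := hmono (left_mem_Icc.2 (hr.1.trans hr.2)) hr hr.1
    simp only [h0] at this
    have : 0 < Z a ^ 2 * exp (2 * L * a) := by positivity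
    linarith
  intro r hr
  by_contra! hneg
  obtain ⟨s, hs, hs0⟩ := intermediate_value_Icc' hr.1 (hZ.mono (Icc_subset_Icc le_rfl hr.2))
    ⟨hneg, ha.le⟩
  exact hne s ⟨hs.1, hs.2.trans hr.2⟩ hs0

theorem le_mul_exp_of_hasDerivAt_le_mul {Z f : ℝ → ℝ} {a c M : ℝ} (hac : a ≤ c)
    (hZ : ContinuousOn Z (Icc a c)) (hZ' : ∀ r ∈ Ioo a c, HasDerivAt Z (f r) r)
    (hf : ∀ r ∈ Ioo a c, f r ≤ M * Z r) : Z c ≤ Z a * exp (M * (c - a)) := by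
  have hanti : AntitoneOn (fun r => Z r * exp (-(M * r))) (Icc a c) := by
    refine antitoneOn_of_hasDerivWithinAt_nonpos (convex_Icc a c) (hZ.mul (by fun_prop))
      (f' := fun r => exp (-(M * r)) * (f r - M * Z r)) (fun r hr => ?_) (fun r hr => ?_)
    · rw [interior_Icc] at hr
      exact ((hZ' r hr).mul ((hasDerivAt_id r).const_mul M).neg.exp).congr_deriv
        (by simp; ring) |>.hasDerivWithinAt
    · rw [interior_Icc] at hr
      exact mul_nonpos_of_nonneg_of_nonpos (exp_pos _).le (by linarith [hf r hr])
  have := hanti (left_mem_Icc.2 hac) (right_mem_Icc.2 hac) hac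
  have hexp : exp (M * (c - a)) = exp (-(M * a)) / exp (-(M * c)) := by
    rw [← exp_sub]; ring_nf
  rw [hexp, ← mul_div_assoc, le_div_iff₀ (exp_pos _)]
  exact this

theorem hasDerivAt_of_eqOn_add_integral {F G : ℝ → ℝ} {a c g₀ r : ℝ}
    (hF : ContinuousOn F (Icc a c)) (hG : ∀ s ∈ Icc a c, G s = g₀ + ∫ τ in a..s, F τ)
    (hr : r ∈ Ioo a c) : HasDerivAt G (F r) r := by
  have hFr : ContinuousAt F r := hF.continuousAt (Icc_mem_nhds hr.1 hr.2)
  have hint : IntervalIntegrable F volume a r :=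
    (hF.mono (uIcc_of_le hr.1.le ▸ Icc_subset_Icc_right hr.2.le)).intervalIntegrable
  have hmeas : StronglyMeasurableAtFilter F (nhds r) volume :=
    (hF.mono Ioo_subset_Icc_self).stronglyMeasurableAtFilter isOpen_Ioo r hr
  refine ((intervalIntegral.integral_hasDerivAt_right hint hmeas hFr).const_add g₀
    ).congr_of_eventuallyEq ?_
  filter_upwards [Icc_mem_nhds hr.1 hr.2] with s hs using hG s hs

theorem exp_integral_sub_div_eq {Z β R : ℝ → ℝ} {v u : ℝ} (hvu : v ≤ u)
    (hZ : ContinuousOn Z (Icc v u)) (hβ : ContinuousOn β (Icc v u))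
    (hR : ContinuousOn R (Icc v u)) (hZ' : ∀ r ∈ Ioo v u, HasDerivAt Z (β r * Z r + R r) r)
    (hZv : Z v ≠ 0) :
    exp (∫ r in v..u, β r) - Z u / Z v =
      -(∫ r in v..u, exp (∫ s in r..u, β s) * R r) / Z v := by
  have hβint : IntegrableOn β (uIcc v u) := by rw [uIcc_of_le hvu]; exact hβ.integrableOn_Icc
  have hE : ContinuousOn (fun r => exp (∫ s in r..u, β s)) (Icc v u) := by
    have := intervalIntegral.continuousOn_primitive_interval_left hβint
    rw [uIcc_of_le hvu] at this
    exact continuous_exp.comp_continuousOn this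
  have hE' : ∀ r ∈ Ioo v u,
      HasDerivAt (fun r => exp (∫ s in r..u, β s)) (-β r * exp (∫ s in r..u, β s)) r := by
    intro r hr
    have hint : IntervalIntegrable β volume r u :=
      (hβ.mono (uIcc_of_le hr.2.le ▸ Icc_subset_Icc_left hr.1.le)).intervalIntegrable
    have hmeas : StronglyMeasurableAtFilter β (nhds r) volume :=
      (hβ.mono Ioo_subset_Icc_self).stronglyMeasurableAtFilter isOpen_Ioo r hr
    exact (intervalIntegral.integral_hasDerivAt_left hint hmeas
      (hβ.continuousAt (Icc_mem_nhds hr.1 hr.2))).exp.congr_deriv (mul_comm _ _)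
  have hFTC : ∫ r in v..u, exp (∫ s in r..u, β s) * R r
      = exp (∫ s in u..u, β s) * Z u - exp (∫ s in v..u, β s) * Z v :=
    intervalIntegral.integral_eq_sub_of_hasDerivAt_of_le hvu (hE.mul hZ)
      (fun r hr => ((hE' r hr).mul (hZ' r hr)).congr_deriv (by ring))
      ((hE.mul hR).intervalIntegrable_of_Icc hvu)
  rw [hFTC, intervalIntegral.integral_same, exp_zero]
  field_simp
  ring

theorem integral_exp_mul_le_mMfun (M u v : ℝ) : ∫ r in v..u, exp (M * r) ≤ mMfun M u v := by
  unfold mMfun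
  rcases lt_trichotomy M 0 with hM | rfl | hM
  · rw [if_pos hM, intervalIntegral.integral_comp_mul_left (fun r => exp r) hM.ne,
      integral_exp, smul_eq_mul]
    have : M⁻¹ * exp (M * u) ≤ 0 :=
      mul_nonpos_of_nonpos_of_nonneg (inv_nonpos.2 hM.le) (exp_pos _).le
    rw [one_div]; linarith
  · simp
  · rw [if_neg (not_lt.2 hM.le), if_neg hM.ne',
      intervalIntegral.integral_comp_mul_left (fun r => exp r) hM.ne', integral_exp, smul_eq_mul]
    have : 0 ≤ M⁻¹ * exp (M * v) := mul_nonneg (inv_nonneg.2 hM.le) (exp_pos _).le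
    rw [one_div]; linarith

theorem exp_mul_le_max_one_exp_mul {M s t : ℝ} (hs : 0 ≤ s) (hst : s ≤ t) :
    exp (M * s) ≤ max 1 (exp (M * t)) := by
  rcases le_total M 0 with hM | hM
  · exact le_max_of_le_left (exp_le_one_iff.2 (mul_nonpos_of_nonpos_of_nonneg hM hs))
  · exact le_max_of_le_right (exp_le_exp.2 (mul_le_mul_of_nonneg_left hst hM))

namespace IsSolution

variable {T σ x y : ℝ} {b w X Y : ℝ → ℝ}

theorem sub_apply_zero (hT : 0 ≤ T) (hX : IsSolution T σ x b w X)
    (hY : IsSolution T σ y b w Y) :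
    Y 0 - X 0 = y - x := by
  rw [hX.2 0 (left_mem_Icc.2 hT), hY.2 0 (left_mem_Icc.2 hT)]
  simp

theorem sub_eq_add_integral (hb : Continuous b) (hX : IsSolution T σ x b w X)
    (hY : IsSolution T σ y b w Y) :
    ∀ r ∈ Icc 0 T, Y r - X r = y - x + ∫ s in (0 : ℝ)..r, (b (Y s) - b (X s)) := by
  intro r hr
  have hsub : uIcc 0 r ⊆ Icc 0 T := uIcc_of_le hr.1 ▸ Icc_subset_Icc_right hr.2
  rw [intervalIntegral.integral_sub (f := fun s => b (Y s)) (g := fun s => b (X s))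
      ((hb.comp_continuousOn hY.1).mono hsub).intervalIntegrable
      ((hb.comp_continuousOn hX.1).mono hsub).intervalIntegrable,
    hX.2 r hr, hY.2 r hr]
  ring

theorem hasDerivAt_sub (hb : Continuous b) (hX : IsSolution T σ x b w X)
    (hY : IsSolution T σ y b w Y) {r : ℝ} (hr : r ∈ Ioo 0 T) :
    HasDerivAt (fun r => Y r - X r) (b (Y r) - b (X r)) r :=
  hasDerivAt_of_eqOn_add_integral ((hb.comp_continuousOn hY.1).sub (hb.comp_continuousOn hX.1))
    (hX.sub_eq_add_integral hb hY) hr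

theorem lt_of_lt {L : NNReal} (hb : LipschitzWith L b) (hX : IsSolution T σ x b w X)
    (hY : IsSolution T σ y b w Y) (hxy : x < y) : ∀ r ∈ Icc 0 T, X r < Y r := by
  intro r hr
  have h0 := hX.sub_apply_zero (hr.1.trans hr.2) hY
  have := pos_of_hasDerivAt_of_abs_le_mul_abs (Z := fun s => Y s - X s) (hY.1.sub hX.1)
    (fun s hs => hX.hasDerivAt_sub hb.continuous hY hs)
    (fun s _ => by simpa [← Real.dist_eq] using hb.dist_le_mul (Y s) (X s))
    (by rw [h0]; linarith) r hr
  linarith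

theorem sub_le_sub_mul_exp {M : ℝ} (hb : Differentiable ℝ b) (hM : ∀ y, deriv b y ≤ M)
    (hX : IsSolution T σ x b w X) (hY : IsSolution T σ y b w Y)
    (hXY : ∀ r ∈ Icc 0 T, X r ≤ Y r) {a c : ℝ} (ha : 0 ≤ a) (hac : a ≤ c) (hc : c ≤ T) :
    Y c - X c ≤ (Y a - X a) * exp (M * (c - a)) :=
  le_mul_exp_of_hasDerivAt_le_mul hac ((hY.1.sub hX.1).mono (Icc_subset_Icc ha hc))
    (fun _ hr => hX.hasDerivAt_sub hb.continuous hY ⟨ha.trans_lt hr.1, hr.2.trans_le hc⟩)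
    (fun r hr => image_sub_le_mul_sub_of_deriv_le hb hM
      (hXY r ⟨ha.trans hr.1.le, hr.2.le.trans hc⟩))

theorem abs_exp_integral_sub_div_le {m M K : ℝ} (hb : ContDiff ℝ 2 b)
    (hm : ∀ y, m ≤ deriv b y) (hM : ∀ y, deriv b y ≤ M) (hK : ∀ y, |deriv (deriv b) y| ≤ K)
    (hX : IsSolution T σ x b w X) (hY : IsSolution T σ y b w Y) (hxy : x < y)
    {v u : ℝ} (hv : 0 ≤ v) (hvu : v ≤ u) (huT : u ≤ T) :
    |exp (∫ r in v..u, deriv b (X r)) - (Y u - X u) / (Y v - X v)| ≤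
      K / 2 * (y - x) * exp (M * (u - v)) * ∫ r in v..u, exp (M * r) := by
  have hb₁ : Differentiable ℝ b := hb.differentiable two_ne_zero
  have hb₂ : Differentiable ℝ (deriv b) := hb.differentiable_deriv_two
  have hbL : LipschitzWith (max ‖m‖₊ ‖M‖₊) b :=
    lipschitzWith_of_nnnorm_deriv_le hb₁ fun z => by
      simp only [← NNReal.coe_le_coe, NNReal.coe_max, coe_nnnorm, Real.norm_eq_abs]
      exact abs_le_max_abs_abs (hm z) (hM z)
  have hlt := hX.lt_of_lt hbL hY hxy
  have hIcc : Icc v u ⊆ Icc 0 T := Icc_subset_Icc hv huT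
  have hZv : 0 < Y v - X v := sub_pos.2 (hlt v (hIcc (left_mem_Icc.2 hvu)))
  have hβ : ContinuousOn (fun r => deriv b (X r)) (Icc 0 T) :=
    hb₂.continuous.comp_continuousOn hX.1
  rw [exp_integral_sub_div_eq (Z := fun r => Y r - X r)
      (R := fun r => b (Y r) - b (X r) - deriv b (X r) * (Y r - X r)) hvu
      ((hY.1.sub hX.1).mono hIcc) (hβ.mono hIcc)
      ((((hb₁.continuous.comp_continuousOn hY.1).sub
        (hb₁.continuous.comp_continuousOn hX.1)).sub (hβ.mul (hY.1.sub hX.1))).mono hIcc)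
      (fun r hr => (hX.hasDerivAt_sub hb₁.continuous hY
        ⟨hv.trans_lt hr.1, hr.2.trans_le huT⟩).congr_deriv (by ring)) hZv.ne',
    abs_div, abs_neg, abs_of_pos hZv, div_le_iff₀ hZv]
  have hpt : ∀ r ∈ Icc v u,
      ‖exp (∫ s in r..u, deriv b (X s)) * (b (Y r) - b (X r) - deriv b (X r) * (Y r - X r))‖ ≤
        K / 2 * (y - x) * exp (M * (u - v)) * (Y v - X v) * exp (M * r) := by
    intro r hr
    have hrT := hIcc hr
    have hexp : exp (∫ s in r..u, deriv b (X s)) ≤ exp (M * (u - r)) := by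
      refine exp_le_exp.2 ((intervalIntegral.integral_mono_on hr.2
        ((hβ.mono (uIcc_of_le hr.2 ▸ Icc_subset_Icc (hv.trans hr.1) huT)).intervalIntegrable)
        intervalIntegrable_const fun s _ => hM (X s)).trans_eq ?_)
      rw [intervalIntegral.integral_const, smul_eq_mul, mul_comm]
    have htaylor := abs_sub_sub_deriv_mul_le hb₁ hb₂ hK (hlt r hrT).le
    have hle : ∀ s ∈ Icc 0 T, X s ≤ Y s := fun s hs => (hlt s hs).le
    have hgrow₀ := hX.sub_le_sub_mul_exp hb₁ hM hY hle le_rfl hrT.1 hrT.2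
    have hgrowᵥ := hX.sub_le_sub_mul_exp hb₁ hM hY hle hv hr.1 hrT.2
    rw [hX.sub_apply_zero (hv.trans (hvu.trans huT)) hY, sub_zero] at hgrow₀
    have hK₀ : 0 ≤ K := (abs_nonneg _).trans (hK 0)
    have hZr : 0 < Y r - X r := sub_pos.2 (hlt r hrT)
    calc _ ≤ exp (M * (u - r)) * (K / 2 * ((Y r - X r) * (Y r - X r))) := by
          rw [norm_mul, Real.norm_eq_abs, Real.norm_eq_abs, abs_exp, ← sq]
          exact mul_le_mul hexp htaylor (abs_nonneg _) (exp_pos _).le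
      _ ≤ exp (M * (u - r)) * (K / 2 * (((y - x) * exp (M * r)) *
            ((Y v - X v) * exp (M * (r - v))))) := by
          gcongr
      _ = K / 2 * (y - x) * exp (M * (u - v)) * (Y v - X v) * exp (M * r) := by
          rw [show M * (u - v) = M * (u - r) + M * (r - v) by ring, exp_add]
          ring
  refine (intervalIntegral.norm_integral_le_of_norm_le hvu
    (Filter.Eventually.of_forall fun r hr => hpt r (Ioc_subset_Icc_self hr))
    (Continuous.intervalIntegrable (by fun_prop) _ _)).trans_eq ?_
  rw [intervalIntegral.integral_const_mul]
  ring

end IsSolution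

theorem quotient_approximates_exp_general (T σ x ε t m M K : ℝ) (hε : 0 < ε)
    (ht : t ∈ Set.Ioc (0 : ℝ) T)
    (w b : ℝ → ℝ)
    (hb : ContDiff ℝ 2 b)
    (hm : ∀ y : ℝ, m ≤ deriv b y) (hM : ∀ y : ℝ, deriv b y ≤ M)
    (hK : ∀ y : ℝ, |deriv (deriv b) y| ≤ K)
    (X Xε : ℝ → ℝ) (hX : IsSolution T σ x b w X) (hXε : IsSolution T σ (x + ε) b w Xε) :
    ∀ v u : ℝ, 0 ≤ v → v < u → u ≤ t →
      |Real.exp (∫ r in v..u, deriv b (X r)) - (Xε u - X u) / (Xε v - X v)| ≤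
        K / 2 * ε * max 1 (Real.exp (M * t)) * mMfun M u v := by
  intro v u hv hvu hut
  have hK₀ : 0 ≤ K := (abs_nonneg _).trans (hK 0)
  have hestimate := hX.abs_exp_integral_sub_div_le hb hm hM hK hXε (lt_add_of_pos_right x hε) hv
    hvu.le (hut.trans ht.2)
  rw [add_sub_cancel_left] at hestimate
  have hkernel := mul_le_mul
    (exp_mul_le_max_one_exp_mul (M := M) (t := t) (sub_nonneg.2 hvu.le) (by linarith))
    (integral_exp_mul_le_mMfun M u v)
    (intervalIntegral.integral_nonneg hvu.le fun r _ => (exp_pos _).le) (by positivity)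
  refine hestimate.trans ?_
  simpa only [mul_assoc] using mul_le_mul_of_nonneg_left hkernel (by positivity : 0 ≤ K / 2 * ε)

/-- For `b ∈ C²(ℝ)` with `m ≤ b' ≤ M` and `|b''| ≤ K`, the quotient of the increments of two
solutions with initial conditions `x` and `x + ε` approximates `exp(∫ᵥᵘ b'(X_x(r)) dr)` with
error at most `(K / 2) ε (1 ∨ e^{M t}) 𝔪_M(u, v)`. -/
theorem quotient_approximates_exp (T σ x ε t m M K : ℝ) (hT : 0 < T) (hε : 0 < ε)
    (ht : t ∈ Set.Ioc (0 : ℝ) T)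
    (w b : ℝ → ℝ) (hw : ContinuousOn w (Set.Icc 0 T))
    (hb : ContDiff ℝ 2 b)
    (hm : ∀ y : ℝ, m ≤ deriv b y) (hM : ∀ y : ℝ, deriv b y ≤ M)
    (hK : ∀ y : ℝ, |deriv (deriv b) y| ≤ K)
    (X Xε : ℝ → ℝ) (hX : IsSolution T σ x b w X) (hXε : IsSolution T σ (x + ε) b w Xε) :
    ∀ v u : ℝ, 0 ≤ v → v < u → u ≤ t →
      |Real.exp (∫ r in v..u, deriv b (X r)) - (Xε u - X u) / (Xε v - X v)| ≤
        K / 2 * ε * max 1 (Real.exp (M * t)) * mMfun M u v :=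
  quotient_approximates_exp_general T σ x ε t m M K hε ht w b hb hm hM hK X Xε hX hXε
end

section
/- Let T > 0, σ ∈ ℝ, α ∈ (0,1], let w : [0,T] → ℝ be α-Hölder continuous, let b : ℝ → ℝ be Lipschitz continuous, and let X be the unique continuous solution on [0,T] of the equation with initial condition x₀. Then X is α-Hölder continuous on [0,T]: there exists C ≥ 0 such that |X(t) − X(s)| ≤ C |t − s|^α for all s, t ∈ [0,T]. -/
open MeasureTheory

/-!
Subtracting the equation at two times gives
`X t - X s = ∫ₛᵗ b (X u) du + σ (w t - w s)`. Since `b ∘ X` is continuous on the compact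
interval `[0, T]` it is bounded, so the drift term is Lipschitz, while the noise term is
`α`-Hölder. On an interval of length `T` a Lipschitz bound `M |t - s|` is also an `α`-Hölder
bound `M T ^ (1 - α) |t - s| ^ α`, because `|t - s| ^ (1 - α) ≤ T ^ (1 - α)`.
-/

open Set

theorem le_rpow_mul_rpow_of_le {h D α : ℝ} (hh : 0 ≤ h) (hhD : h ≤ D) (hα : α ≤ 1) :
    h ≤ D ^ (1 - α) * h ^ α := by
  rcases hh.eq_or_lt with rfl | hpos
  · have := Real.rpow_nonneg hhD (1 - α)
    positivity
  · calc h = h ^ (1 - α) * h ^ α := by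
          rw [← Real.rpow_add hpos, sub_add_cancel, Real.rpow_one]
      _ ≤ D ^ (1 - α) * h ^ α := by gcongr

theorem abs_sub_le_mul_rpow_of_lipschitz_add_holder {f : ℝ → ℝ} {a b L K α : ℝ}
    (hα : α ≤ 1) (hL : 0 ≤ L)
    (hf : ∀ s ∈ Icc a b, ∀ t ∈ Icc a b, |f t - f s| ≤ L * |t - s| + K * |t - s| ^ α)
    {s t : ℝ} (hs : s ∈ Icc a b) (ht : t ∈ Icc a b) :
    |f t - f s| ≤ (L * (b - a) ^ (1 - α) + K) * |t - s| ^ α := by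
  have hts : |t - s| ≤ b - a :=
    abs_sub_le_iff.2 ⟨by linarith [hs.1, ht.2], by linarith [hs.2, ht.1]⟩
  calc |f t - f s| ≤ L * |t - s| + K * |t - s| ^ α := hf s hs t ht
    _ ≤ L * ((b - a) ^ (1 - α) * |t - s| ^ α) + K * |t - s| ^ α := by
        gcongr; exact le_rpow_mul_rpow_of_le (abs_nonneg _) hts hα
    _ = (L * (b - a) ^ (1 - α) + K) * |t - s| ^ α := by ring

namespace IsSolution

variable {T σ x₀ : ℝ} {b w X : ℝ → ℝ}

theorem sub_eq (hX : IsSolution T σ x₀ b w X) (hb : Continuous b) {s t : ℝ}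
    (hs : s ∈ Icc 0 T) (ht : t ∈ Icc 0 T) :
    X t - X s = (∫ u in s..t, b (X u)) + σ * (w t - w s) := by
  have hint : ∀ r ∈ Icc 0 T, IntervalIntegrable (fun u => b (X u)) volume 0 r := fun r hr =>
    ((hb.comp_continuousOn hX.1).mono
      (uIcc_subset_Icc (left_mem_Icc.2 (hs.1.trans hs.2)) hr)).intervalIntegrable
  rw [hX.2 t ht, hX.2 s hs,
    ← intervalIntegral.integral_interval_sub_left (hint t ht) (hint s hs)]
  ring

theorem abs_sub_le (hX : IsSolution T σ x₀ b w X) (hb : Continuous b) {M : ℝ}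
    (hM : ∀ u ∈ Icc 0 T, |b (X u)| ≤ M) {s t : ℝ} (hs : s ∈ Icc 0 T) (ht : t ∈ Icc 0 T) :
    |X t - X s| ≤ M * |t - s| + |σ| * |w t - w s| := by
  have hdrift : |∫ u in s..t, b (X u)| ≤ M * |t - s| := by
    simpa only [Real.norm_eq_abs] using
      intervalIntegral.norm_integral_le_of_norm_le_const (f := fun u => b (X u)) fun u hu =>
        hM u (uIcc_subset_Icc hs ht (uIoc_subset_uIcc hu))
  rw [hX.sub_eq hb hs ht, ← abs_mul]
  exact (abs_add_le _ _).trans (add_le_add_left hdrift _)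

end IsSolution

/-- If `w` is `α`-Hölder continuous on `[0, T]` and `b` is Lipschitz, then the solution `X` of
the equation is `α`-Hölder continuous on `[0, T]`. -/
theorem solution_is_holder (T σ x₀ α : ℝ) (hT : 0 < T) (hα : α ∈ Set.Ioc (0 : ℝ) 1)
    (w b : ℝ → ℝ) (Cw : ℝ) (hCw : 0 ≤ Cw)
    (hw : ∀ s ∈ Set.Icc (0 : ℝ) T, ∀ t ∈ Set.Icc (0 : ℝ) T, |w t - w s| ≤ Cw * |t - s| ^ α)
    (Lb : ℝ) (hLb : 0 ≤ Lb) (hb : ∀ y z : ℝ, |b y - b z| ≤ Lb * |y - z|)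
    (X : ℝ → ℝ) (hX : IsSolution T σ x₀ b w X) :
    ∃ C : ℝ, 0 ≤ C ∧ ∀ s ∈ Set.Icc (0 : ℝ) T, ∀ t ∈ Set.Icc (0 : ℝ) T,
      |X t - X s| ≤ C * |t - s| ^ α := by
  have hbc : Continuous b :=
    (LipschitzWith.of_dist_le_mul hb : LipschitzWith ⟨Lb, hLb⟩ b).continuous
  obtain ⟨M, hM⟩ := isCompact_Icc.exists_bound_of_continuousOn (hbc.comp_continuousOn hX.1)
  have hM0 : 0 ≤ M := (norm_nonneg _).trans (hM 0 (left_mem_Icc.2 hT.le))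
  refine ⟨M * T ^ (1 - α) + |σ| * Cw, by positivity, fun s hs t ht => ?_⟩
  have hincr : ∀ s ∈ Icc 0 T, ∀ t ∈ Icc 0 T,
      |X t - X s| ≤ M * |t - s| + |σ| * Cw * |t - s| ^ α := fun s hs t ht =>
    (hX.abs_sub_le hbc hM hs ht).trans (by rw [mul_assoc]; gcongr; exact hw s hs t ht)
  simpa only [sub_zero] using abs_sub_le_mul_rpow_of_lipschitz_add_holder hα.2 hM0 hincr hs ht
end

section
/- Let a₁ < a₂ be real numbers, let f : [a₁, a₂] → ℝ be measurable with f(x) ≥ f₀ > 0 for all x ∈ [a₁, a₂] and ∫_{a₁}^{a₂} f(x) dx ≤ 1, let h : [a₁, a₂] → ℝ be continuous and c ∈ ℝ. Then ∫_{a₁}^{a₂} ( c + ∫_{a₁}^x h(y) dy )² f(x) dx ≤ 2 c² + (2 (a₂ − a₁) / f₀) ∫_{a₁}^{a₂} h(y)² f(y) dy. -/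
/-!
Bound the integrand pointwise: by `(u + v)² ≤ 2(u² + v²)` and Cauchy–Schwarz,
`(c + ∫_{a₁}^x g)² ≤ 2c² + 2(a₂ - a₁) ∫_{a₁}^{a₂} g²`, and `f ≥ f₀` gives
`∫ g² ≤ f₀⁻¹ ∫ g² f`. Integrating this constant bound against `f`, whose total mass is at
most `1`, gives the claim.
-/

open MeasureTheory Set

theorem sq_integral_le_measureReal_mul_integral_sq {α : Type*} [MeasurableSpace α]
    {μ : Measure α} [IsFiniteMeasure μ] {g : α → ℝ} (hg : Integrable g μ)
    (hg2 : Integrable (fun x => g x ^ 2) μ) :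
    (∫ x, g x ∂μ) ^ 2 ≤ μ.real univ * ∫ x, g x ^ 2 ∂μ := by
  set m := μ.real univ
  set A := ∫ x, g x ∂μ
  rcases (measureReal_nonneg : 0 ≤ m).eq_or_lt with hm | hm
  · have hμ : μ = 0 := by
      simpa [m, measureReal_def, ENNReal.toReal_eq_zero_iff, measure_ne_top] using hm.symm
    simp [A, hμ]
  have hvar : 0 ≤ ∫ x, (m * g x - A) ^ 2 ∂μ := integral_nonneg fun _ => sq_nonneg _
  have hexpand : ∫ x, (m * g x - A) ^ 2 ∂μ = m * (m * ∫ x, g x ^ 2 ∂μ - A ^ 2) := by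
    have hsplit : (fun x => (m * g x - A) ^ 2)
        = fun x => (m ^ 2 * g x ^ 2 - 2 * m * A * g x) + A ^ 2 := by
      funext x; ring
    have hint : Integrable (fun x => m ^ 2 * g x ^ 2 - 2 * m * A * g x) μ :=
      (hg2.const_mul _).sub (hg.const_mul _)
    rw [hsplit, integral_add hint (integrable_const _),
      integral_sub (hg2.const_mul _) (hg.const_mul _), integral_const_mul, integral_const_mul,
      integral_const, smul_eq_mul]
    ring
  nlinarith

theorem sq_intervalIntegral_le {a b : ℝ} (hab : a ≤ b) {g : ℝ → ℝ}
    (hg : IntervalIntegrable g volume a b)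
    (hg2 : IntervalIntegrable (fun x => g x ^ 2) volume a b) :
    (∫ x in a..b, g x) ^ 2 ≤ (b - a) * ∫ x in a..b, g x ^ 2 := by
  rw [intervalIntegral.integral_of_le hab, intervalIntegral.integral_of_le hab]
  simpa [Real.volume_real_Ioc_of_le hab] using
    sq_integral_le_measureReal_mul_integral_sq hg.1 hg2.1

theorem sq_add_intervalIntegral_le {a b x : ℝ} (hx : x ∈ Icc a b) (c : ℝ) {g : ℝ → ℝ}
    (hg : IntervalIntegrable g volume a b)
    (hg2 : IntervalIntegrable (fun y => g y ^ 2) volume a b) :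
    (c + ∫ y in a..x, g y) ^ 2 ≤ 2 * c ^ 2 + 2 * ((b - a) * ∫ y in a..b, g y ^ 2) := by
  have hsub : uIcc a x ⊆ uIcc a b := uIcc_subset_uIcc left_mem_uIcc (mem_uIcc_of_le hx.1 hx.2)
  have hg2_nonneg : 0 ≤ ∫ y in a..x, g y ^ 2 :=
    intervalIntegral.integral_nonneg hx.1 fun _ _ => sq_nonneg _
  have hg2_mono : ∫ y in a..x, g y ^ 2 ≤ ∫ y in a..b, g y ^ 2 :=
    intervalIntegral.integral_mono_interval le_rfl hx.1 hx.2
      (Filter.Eventually.of_forall fun _ => sq_nonneg _) hg2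
  calc (c + ∫ y in a..x, g y) ^ 2 ≤ 2 * (c ^ 2 + (∫ y in a..x, g y) ^ 2) := add_sq_le
    _ ≤ 2 * (c ^ 2 + (x - a) * ∫ y in a..x, g y ^ 2) := by
      gcongr
      exact sq_intervalIntegral_le hx.1 (hg.mono_set hsub) (hg2.mono_set hsub)
    _ ≤ 2 * c ^ 2 + 2 * ((b - a) * ∫ y in a..b, g y ^ 2) := by
      have : (x - a) * ∫ y in a..x, g y ^ 2 ≤ (b - a) * ∫ y in a..b, g y ^ 2 :=
        mul_le_mul (by linarith [hx.2]) hg2_mono hg2_nonneg (by linarith [hx.1, hx.2])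
      linarith

theorem mul_intervalIntegral_le_intervalIntegral_mul {a b f₀ : ℝ} (hab : a ≤ b) {f h : ℝ → ℝ}
    (hf : ∀ x ∈ Icc a b, f₀ ≤ f x) (hh : ∀ x ∈ Icc a b, 0 ≤ h x)
    (hhi : IntervalIntegrable h volume a b)
    (hhfi : IntervalIntegrable (fun x => h x * f x) volume a b) :
    f₀ * ∫ x in a..b, h x ≤ ∫ x in a..b, h x * f x := by
  rw [← intervalIntegral.integral_const_mul]
  refine intervalIntegral.integral_mono_on hab (hhi.const_mul f₀) hhfi fun x hx => ?_
  rw [mul_comm]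
  exact mul_le_mul_of_nonneg_left (hf x hx) (hh x hx)

theorem primitive_weighted_bound_general (a₁ a₂ : ℝ) (ha : a₁ < a₂) (f g : ℝ → ℝ) (f₀ c : ℝ)
    (hf₀ : 0 < f₀)
    (hflb : ∀ x ∈ Set.Icc a₁ a₂, f₀ ≤ f x)
    (hfint : IntegrableOn f (Set.Icc a₁ a₂))
    (hf1 : (∫ x in a₁..a₂, f x) ≤ 1)
    (hg : ContinuousOn g (Set.Icc a₁ a₂)) :
    (∫ x in a₁..a₂, (c + ∫ y in a₁..x, g y) ^ 2 * f x) ≤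
      2 * c ^ 2 + 2 * (a₂ - a₁) / f₀ * ∫ y in a₁..a₂, (g y) ^ 2 * f y := by
  have hmul_f {u : ℝ → ℝ} (hu : ContinuousOn u (Icc a₁ a₂)) :
      IntervalIntegrable (fun x => u x * f x) volume a₁ a₂ :=
    (intervalIntegrable_iff_integrableOn_Icc_of_le ha.le).2
      (hfint.continuousOn_mul hu isCompact_Icc)
  set J := ∫ y in a₁..a₂, g y ^ 2 * f y
  set K := 2 * c ^ 2 + 2 * (a₂ - a₁) / f₀ * J
  have hg2 : ContinuousOn (fun y => g y ^ 2) (Icc a₁ a₂) := hg.pow 2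
  have hweight : f₀ * ∫ y in a₁..a₂, g y ^ 2 ≤ J :=
    mul_intervalIntegral_le_intervalIntegral_mul ha.le hflb (fun _ _ => sq_nonneg _)
      (hg2.intervalIntegrable_of_Icc ha.le) (hmul_f hg2)
  have hK_nonneg : 0 ≤ K := by
    have : 0 ≤ J := (mul_nonneg hf₀.le
      (intervalIntegral.integral_nonneg ha.le fun _ _ => sq_nonneg _)).trans hweight
    have : 0 ≤ 2 * (a₂ - a₁) / f₀ := div_nonneg (by linarith) hf₀.le
    positivity
  have hpt : ∀ x ∈ Icc a₁ a₂, (c + ∫ y in a₁..x, g y) ^ 2 ≤ K := fun x hx => by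
    refine (sq_add_intervalIntegral_le hx c (hg.intervalIntegrable_of_Icc ha.le)
      (hg2.intervalIntegrable_of_Icc ha.le)).trans ?_
    rw [show K = 2 * c ^ 2 + 2 * ((a₂ - a₁) * (J / f₀)) by ring]
    gcongr
    rwa [le_div_iff₀ hf₀, mul_comm]
  have hprimitive : ContinuousOn (fun x => (c + ∫ y in a₁..x, g y) ^ 2) (Icc a₁ a₂) := by
    rw [← uIcc_of_le ha.le] at hg ⊢
    exact (continuousOn_const.add
      (intervalIntegral.continuousOn_primitive_interval hg.integrableOn_Icc)).pow 2
  calc (∫ x in a₁..a₂, (c + ∫ y in a₁..x, g y) ^ 2 * f x) ≤ ∫ x in a₁..a₂, K * f x :=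
        intervalIntegral.integral_mono_on ha.le (hmul_f hprimitive) (hmul_f continuousOn_const)
          fun x hx => mul_le_mul_of_nonneg_right (hpt x hx) (hf₀.le.trans (hflb x hx))
    _ = K * ∫ x in a₁..a₂, f x := intervalIntegral.integral_const_mul K f
    _ ≤ K := mul_le_of_le_one_right hK_nonneg hf1

/-- If `f ≥ f₀ > 0` on `[a₁, a₂]` with `∫ f ≤ 1` and `g` is continuous on `[a₁, a₂]`, then
`∫ (c + ∫_{a₁}^x g)² f ≤ 2 c² + (2 (a₂ - a₁) / f₀) ∫ g² f`. -/
theorem primitive_weighted_bound (a₁ a₂ : ℝ) (ha : a₁ < a₂) (f g : ℝ → ℝ) (f₀ c : ℝ)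
    (hf₀ : 0 < f₀) (hfmeas : Measurable f)
    (hflb : ∀ x ∈ Set.Icc a₁ a₂, f₀ ≤ f x)
    (hfint : IntegrableOn f (Set.Icc a₁ a₂))
    (hf1 : (∫ x in a₁..a₂, f x) ≤ 1)
    (hg : ContinuousOn g (Set.Icc a₁ a₂)) :
    (∫ x in a₁..a₂, (c + ∫ y in a₁..x, g y) ^ 2 * f x) ≤
      2 * c ^ 2 + 2 * (a₂ - a₁) / f₀ * ∫ y in a₁..a₂, (g y) ^ 2 * f y :=
  primitive_weighted_bound_general a₁ a₂ ha f g f₀ c hf₀ hflb hfint hf1 hg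
end
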